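/- arXiv:2004.05718 — 3 statements merged into one kernel-verified Lean document; each statement's English description precedes it below -/
import Mathlib

section
/- A multiset of n real numbers is uniquely determined by its power sums p₁,...,pₙ: if R and R' are multisets of size n over ℝ with ∑_{r∈R} r^k = ∑_{r∈R'} r^k for all k = 1,...,n, then R = R'. -/
/-!
By Newton's identities `k e_k = ± ∑_{j<k} ± e_j p_{k-j}`, so in characteristic zero the power sums
`p_1, …, p_n` determine the elementary symmetric functions `e_0, …, e_n` by strong induction. By
Vieta these are the coefficients of `∏_{r ∈ R} (X - r)`, whose roots with multiplicity are `R`.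
-/

open Finset Polynomial

namespace Multiset

variable {K : Type*} [CommRing K]

theorem exists_fin_univ_map_eq {α : Type*} (s : Multiset α) :
    ∃ (m : ℕ) (f : Fin m → α), univ.val.map f = s :=
  ⟨_, s.toList.get, by rw [Fin.univ_val_map, List.ofFn_get, coe_toList]⟩

theorem mul_esymm_eq_sum (s : Multiset K) (k : ℕ) :
    k * s.esymm k = (-1) ^ (k + 1) * ∑ a ∈ HasAntidiagonal.antidiagonal k with a.1 < k,
      (-1) ^ a.1 * s.esymm a.1 * (s.map (· ^ a.2)).sum := by
  obtain ⟨m, f, rfl⟩ := s.exists_fin_univ_map_eq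
  have hpsum (j : ℕ) :
      MvPolynomial.aeval f (MvPolynomial.psum (Fin m) K j) = ((univ.val.map f).map (· ^ j)).sum := by
    rw [map_map]
    simp only [MvPolynomial.psum, map_sum, map_pow, MvPolynomial.aeval_X]
    rfl
  simpa only [map_mul, map_sum, map_pow, map_natCast, map_neg, map_one,
    MvPolynomial.aeval_esymm_eq_multiset_esymm, hpsum] using
    congrArg (MvPolynomial.aeval f) (MvPolynomial.mul_esymm_eq_sum (Fin m) K k)

theorem esymm_eq_of_sum_map_pow_eq [IsDomain K] [CharZero K] {s t : Multiset K} {n : ℕ}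
    (h : ∀ k, 1 ≤ k → k ≤ n → (s.map (· ^ k)).sum = (t.map (· ^ k)).sum) :
    ∀ k ≤ n, s.esymm k = t.esymm k := by
  intro k
  induction k using Nat.strong_induction_on with
  | _ k ih =>
    intro hkn
    rcases Nat.eq_zero_or_pos k with rfl | hk
    · simp [esymm]
    have hsum : ∑ a ∈ HasAntidiagonal.antidiagonal k with a.1 < k,
          (-1) ^ a.1 * s.esymm a.1 * (s.map (· ^ a.2)).sum =
        ∑ a ∈ HasAntidiagonal.antidiagonal k with a.1 < k,
          (-1) ^ a.1 * t.esymm a.1 * (t.map (· ^ a.2)).sum := by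
      refine sum_congr rfl fun a ha => ?_
      rw [Finset.mem_filter, HasAntidiagonal.mem_antidiagonal] at ha
      rw [ih a.1 ha.2 (by omega), h a.2 (by omega) (by omega)]
    refine mul_left_cancel₀ (Nat.cast_ne_zero.mpr hk.ne') ?_
    rw [mul_esymm_eq_sum, mul_esymm_eq_sum, hsum]

theorem eq_of_esymm_eq [IsDomain K] {s t : Multiset K} (hcard : card s = card t)
    (h : ∀ k ≤ card s, s.esymm k = t.esymm k) : s = t := by
  have hprod : (s.map (X - C ·)).prod = (t.map (X - C ·)).prod := by
    rw [prod_X_sub_X_eq_sum_esymm, prod_X_sub_X_eq_sum_esymm, ← hcard]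
    exact sum_congr rfl fun k hk => by rw [h k (Nat.lt_succ_iff.mp (mem_range.mp hk))]
  simpa only [roots_multiset_prod_X_sub_C] using congrArg roots hprod

end Multiset

/-- a multiset of `n` reals is uniquely determined by its power
sums `p₁,...,pₙ`. -/
theorem power_sums_determine_multiset (n : ℕ) (R R' : Multiset ℝ)
    (hR : Multiset.card R = n) (hR' : Multiset.card R' = n)
    (h : ∀ k, 1 ≤ k → k ≤ n →
      (R.map (fun r => r ^ k)).sum = (R'.map (fun r => r ^ k)).sum) :
    R = R' :=
  Multiset.eq_of_esymm_eq (hR.trans hR'.symm) fun k hk =>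
    Multiset.esymm_eq_of_sum_map_pow_eq h k (hR ▸ hk)
end

section
/- The mean aggregator together with any injective degree scaler determines cardinality and mean: let s : ℕ → ℝ be injective with s(i) > 0 for all i ≤ N, let γ = min{s(i)/s(j) : i,j ∈ [0,N], s(i) ≥ s(j)} (so γ > 1), and let K > 1/(γ−1). If X' and X'' are nonempty multisets of size at most N whose elements, under a fixed function f with range in [K, K+1], satisfy s(|X'|)·mean_{x∈X'} f(x) = s(|X''|)·mean_{x∈X''} f(x), then |X'| = |X''|. -/
/-!
Every mean of values in `[K, K + 1]` lies in `[K, K + 1]`, so a scaled mean with scale `s n`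
lies in `[s n * K, s n * (K + 1)]`. Distinct scales differ by a factor at least `γ`, and
`K > 1 / (γ - 1)` is exactly `K + 1 < γ * K`, which makes these intervals disjoint.
-/

theorem Multiset.sum_div_card_mem_Icc {α : Type*} [Field α] [LinearOrder α]
    [IsStrictOrderedRing α] {X : Multiset α} {a b : α} (hX : X ≠ 0)
    (hmem : ∀ x ∈ X, x ∈ Set.Icc a b) : X.sum / Multiset.card X ∈ Set.Icc a b := by
  have hcard : (0 : α) < Multiset.card X := by exact_mod_cast Multiset.card_pos.2 hX
  have hlower : Multiset.card X • a ≤ X.sum := Multiset.card_nsmul_le_sum fun x hx ↦ (hmem x hx).1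
  have hupper : X.sum ≤ Multiset.card X • b := X.sum_le_card_nsmul b fun x hx ↦ (hmem x hx).2
  rw [nsmul_eq_mul] at hlower hupper
  exact ⟨(le_div_iff₀ hcard).2 (by linarith), (div_le_iff₀ hcard).2 (by linarith)⟩

theorem add_one_lt_mul_of_one_div_sub_one_lt {γ K : ℝ} (hγ : 1 < γ) (hK : 1 / (γ - 1) < K) :
    K + 1 < γ * K := by
  have := (div_lt_iff₀ (sub_pos.2 hγ)).1 hK
  linarith

theorem mul_lt_mul_of_ratio_gap {γ K a b x y : ℝ} (ha : 0 ≤ a) (hb : 0 < b) (hK : 0 ≤ K)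
    (hgap : K + 1 < γ * K) (hab : γ * b ≤ a) (hx : K ≤ x) (hy : y ≤ K + 1) :
    b * y < a * x :=
  calc b * y ≤ b * (K + 1) := mul_le_mul_of_nonneg_left hy hb.le
    _ < b * (γ * K) := mul_lt_mul_of_pos_left hgap hb
    _ = γ * b * K := by ring
    _ ≤ a * K := mul_le_mul_of_nonneg_right hab hK
    _ ≤ a * x := mul_le_mul_of_nonneg_left hx ha

theorem scaled_mean_determines_cardinality_general {χ : Type*} (N : ℕ) (s : ℕ → ℝ)
    (hpos : ∀ i ≤ N, 0 < s i)
    (γ : ℝ) (hγ1 : 1 < γ)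
    (hγ : ∀ i j, i ≤ N → j ≤ N → i ≠ j → s j ≤ s i → γ ≤ s i / s j)
    (K : ℝ) (hK : 1 / (γ - 1) < K)
    (f : χ → ℝ) (hf : ∀ x, f x ∈ Set.Icc K (K + 1))
    (X' X'' : Multiset χ) (hX'0 : X' ≠ 0) (hX''0 : X'' ≠ 0)
    (hX' : Multiset.card X' ≤ N) (hX'' : Multiset.card X'' ≤ N)
    (h : s (Multiset.card X') * ((X'.map f).sum / Multiset.card X') =
         s (Multiset.card X'') * ((X''.map f).sum / Multiset.card X'')) :
    Multiset.card X' = Multiset.card X'' := by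
  have hK0 : 0 < K := (one_div_pos.2 (sub_pos.2 hγ1)).trans hK
  have hgap := add_one_lt_mul_of_one_div_sub_one_lt hγ1 hK
  have hmean : ∀ X : Multiset χ, X ≠ 0 → (X.map f).sum / Multiset.card X ∈ Set.Icc K (K + 1) :=
    fun X hX ↦ by
      simpa using Multiset.sum_div_card_mem_Icc (mt Multiset.map_eq_zero.1 hX)
        (Multiset.forall_mem_map_iff.2 fun x _ ↦ hf x)
  by_contra hne
  wlog hle : s (Multiset.card X'') ≤ s (Multiset.card X') generalizing X' X''
  · exact this X'' X' hX''0 hX'0 hX'' hX' h.symm (Ne.symm hne) (le_of_not_ge hle)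
  have hratio : γ * s (Multiset.card X'') ≤ s (Multiset.card X') :=
    (le_div_iff₀ (hpos _ hX'')).1 (hγ _ _ hX' hX'' hne hle)
  exact (mul_lt_mul_of_ratio_gap (hpos _ hX').le (hpos _ hX'') hK0.le hgap hratio
    (hmean X' hX'0).1 (hmean X'' hX''0).2).ne h.symm

/-- mean aggregation scaled by an injective positive function of the
cardinality determines the cardinality. Here `γ` is the minimal ratio between
distinct values of `s` on `{0,...,N}` (so `γ ≤ s i / s j` whenever
`s j ≤ s i`, `i ≠ j`, and `γ > 1`), `K > 1/(γ-1)`, and `f` takes values in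
`[K, K+1]`. -/
theorem scaled_mean_determines_cardinality {χ : Type*} (N : ℕ) (s : ℕ → ℝ)
    (hs : Function.Injective s) (hpos : ∀ i ≤ N, 0 < s i)
    (γ : ℝ) (hγ1 : 1 < γ)
    (hγ : ∀ i j, i ≤ N → j ≤ N → i ≠ j → s j ≤ s i → γ ≤ s i / s j)
    (K : ℝ) (hK : 1 / (γ - 1) < K)
    (f : χ → ℝ) (hf : ∀ x, f x ∈ Set.Icc K (K + 1))
    (X' X'' : Multiset χ) (hX'0 : X' ≠ 0) (hX''0 : X'' ≠ 0)
    (hX' : Multiset.card X' ≤ N) (hX'' : Multiset.card X'' ≤ N)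
    (h : s (Multiset.card X') * ((X'.map f).sum / Multiset.card X') =
         s (Multiset.card X'') * ((X''.map f).sum / Multiset.card X'')) :
    Multiset.card X' = Multiset.card X'' :=
  scaled_mean_determines_cardinality_general N s hpos γ hγ1 hγ K hK f hf X' X'' hX'0 hX''0 hX' hX''
    h
end

section
/- Scaled-mean injectivity on countable bounded multisets: let χ be a countable set, Z : χ → ℕ⁺ injective, N ∈ ℕ with all multiset sizes strictly below N, s : ℕ → ℝ injective with positive values on [0,N], and K > 1/(γ−1) with γ as the minimal ratio >1 between distinct values of s. Define f(x) = N^{−Z(x)} + K and h(X) = s(|X|) · (1/|X|) ∑_{x∈X} f(x). Then h is injective on the set of nonempty multisets over χ of size less than N. -/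
/-!
Every mean of values of `f` lies in `(K, K + 1]`. If two scaled means agree while the sizes
differ, the ratio of the two scalers is at least `γ`, yet it equals a ratio of means, which is
below `(K + 1) / K < γ`; so the sizes, and then the sums `∑ N ^ (-Z x)`, agree. Multiplied by a
large power of `N`, such a sum is a base-`N` numeral whose digits are the multiplicities of the
values of `Z`; these are below `N`, so uniqueness of base-`N` expansions recovers `X.map Z`.
-/

open Finset

theorem Nat.eq_of_sum_range_mul_pow_eq {b n : ℕ} {c d : ℕ → ℕ}
    (hc : ∀ i < n, c i < b) (hd : ∀ i < n, d i < b)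
    (h : ∑ i ∈ range n, c i * b ^ i = ∑ i ∈ range n, d i * b ^ i) :
    ∀ i < n, c i = d i := by
  induction n generalizing c d with
  | zero => simp
  | succ n ih =>
    have hsplit (e : ℕ → ℕ) :
        ∑ i ∈ range (n + 1), e i * b ^ i = e 0 + b * ∑ i ∈ range n, e (i + 1) * b ^ i := by
      rw [sum_range_succ', mul_sum, add_comm]
      simp only [pow_succ, pow_zero, mul_one]
      congr 1
      exact sum_congr rfl fun i _ => by ring
    rw [hsplit, hsplit] at h
    have hc0 := hc 0 n.succ_pos
    have hd0 := hd 0 n.succ_pos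
    have head : c 0 = d 0 := by
      simpa [Nat.add_mul_mod_self_left, Nat.mod_eq_of_lt hc0, Nat.mod_eq_of_lt hd0] using
        congrArg (· % b) h
    have tail := ih (c := fun i => c (i + 1)) (d := fun i => d (i + 1))
      (fun i hi => hc _ (by omega)) (fun i hi => hd _ (by omega))
      (Nat.eq_of_mul_eq_mul_left (by omega) (Nat.add_left_cancel (head ▸ h)))
    rintro (_ | i) hi
    · exact head
    · exact tail i (by omega)

theorem Multiset.sum_map_eq_sum_range_count {M : Type*} [AddCommMonoid M] {C : Multiset ℕ}
    {n : ℕ} (hC : ∀ a ∈ C, a < n) (g : ℕ → M) :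
    (C.map g).sum = ∑ a ∈ Finset.range n, C.count a • g a := by
  rw [Finset.sum_multiset_map_count]
  refine Finset.sum_subset (fun a ha => by simpa using hC a (by simpa using ha)) fun a _ ha => ?_
  rw [count_eq_zero_of_notMem (by simpa using ha), zero_smul]

theorem Multiset.eq_of_sum_map_zpow_neg_eq {N : ℕ} {A B : Multiset ℕ}
    (hA : card A < N) (hB : card B < N)
    (h : (A.map fun a : ℕ => (N : ℝ) ^ (-(a : ℤ))).sum =
      (B.map fun a : ℕ => (N : ℝ) ^ (-(a : ℤ))).sum) :
    A = B := by
  set M := (A + B).sup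
  have hAM : ∀ a ∈ A, a ≤ M := fun a ha => le_sup (mem_add.2 (.inl ha))
  have hBM : ∀ a ∈ B, a ≤ M := fun a ha => le_sup (mem_add.2 (.inr ha))
  have hN : (N : ℝ) ≠ 0 := Nat.cast_ne_zero.2 (by omega)
  have expand (C : Multiset ℕ) (hC : ∀ a ∈ C, a ≤ M) :
      (N : ℝ) ^ M * (C.map fun a : ℕ => (N : ℝ) ^ (-(a : ℤ))).sum =
        ((∑ i ∈ Finset.range (M + 1), C.count (M - i) * N ^ i : ℕ) : ℝ) := by
    rw [← sum_map_mul_left, sum_map_eq_sum_range_count fun a ha => Nat.lt_succ_of_le (hC a ha),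
      ← Finset.sum_range_reflect]
    push_cast
    refine Finset.sum_congr rfl fun i hi => ?_
    have hi : i ≤ M := Nat.le_of_lt_succ (Finset.mem_range.1 hi)
    have hpow : (N : ℝ) ^ M * (N : ℝ) ^ (-((M - i : ℕ) : ℤ)) = (N : ℝ) ^ i := by
      rw [← zpow_natCast, ← zpow_add₀ hN, ← zpow_natCast]
      push_cast [Nat.cast_sub hi]
      ring_nf
    rw [nsmul_eq_mul, ← hpow, mul_left_comm]
  have hsum : ∑ i ∈ Finset.range (M + 1), A.count (M - i) * N ^ i =
      ∑ i ∈ Finset.range (M + 1), B.count (M - i) * N ^ i := by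
    exact_mod_cast (expand A hAM).symm.trans (h ▸ expand B hBM)
  have hcount := Nat.eq_of_sum_range_mul_pow_eq
    (fun i _ => (A.count_le_card _).trans_lt hA) (fun i _ => (B.count_le_card _).trans_lt hB) hsum
  ext a
  by_cases ha : a ≤ M
  · simpa [Nat.sub_sub_self ha] using hcount (M - a) (by omega)
  · rw [count_eq_zero_of_notMem fun h => ha (hAM a h),
      count_eq_zero_of_notMem fun h => ha (hBM a h)]

theorem Multiset.sum_map_div_card_mem_Ioc {ι α : Type*} [Field α] [LinearOrder α]
    [IsStrictOrderedRing α] {X : Multiset ι} (hX : X ≠ 0) {f : ι → α} {a b : α}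
    (hf : ∀ x ∈ X, f x ∈ Set.Ioc a b) :
    (X.map f).sum / card X ∈ Set.Ioc a b := by
  have hcard : (0 : α) < card X := by exact_mod_cast card_pos.2 hX
  have lower : (X.map fun _ => a).sum < (X.map f).sum :=
    sum_lt_sum_of_nonempty hX fun x hx => (hf x hx).1
  have upper : (X.map f).sum ≤ (X.map fun _ => b).sum :=
    sum_map_le_sum_map _ _ fun x hx => (hf x hx).2
  simp only [map_const', sum_replicate, nsmul_eq_mul] at lower upper
  rw [Set.mem_Ioc, lt_div_iff₀ hcard, div_le_iff₀ hcard]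
  constructor <;> linarith

theorem eq_and_eq_of_mul_eq_mul_of_mem_Ioc {s : ℕ → ℝ} {N : ℕ} {γ K : ℝ}
    (hpos : ∀ i ≤ N, 0 < s i)
    (hγ : ∀ i j, i ≤ N → j ≤ N → i ≠ j → s j ≤ s i → γ ≤ s i / s j)
    (hγ1 : 1 < γ) (hK : 1 / (γ - 1) < K) {i j : ℕ} (hi : i ≤ N) (hj : j ≤ N) {m₁ m₂ : ℝ}
    (hm₁ : m₁ ∈ Set.Ioc K (K + 1)) (hm₂ : m₂ ∈ Set.Ioc K (K + 1)) (h : s i * m₁ = s j * m₂) :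
    i = j ∧ m₁ = m₂ := by
  wlog hle : s j ≤ s i generalizing i j m₁ m₂
  · obtain ⟨hji, h21⟩ := this hj hi hm₂ hm₁ h.symm (le_of_not_ge hle)
    exact ⟨hji.symm, h21.symm⟩
  have hK0 : 0 < K := (one_div_pos.2 (sub_pos.2 hγ1)).trans hK
  have hm₁0 : 0 < m₁ := hK0.trans hm₁.1
  have hij : i = j := by
    by_contra hne
    have hratio : s i / s j = m₂ / m₁ := by
      rw [div_eq_div_iff (hpos j hj).ne' hm₁0.ne']
      linarith
    have hmeans : m₂ / m₁ < (K + 1) / K :=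
      (div_le_div_of_nonneg_right hm₂.2 hm₁0.le).trans_lt
        (div_lt_div_of_pos_left (by linarith) hK0 hm₁.1)
    have hγK : (K + 1) / K < γ := by
      rw [div_lt_iff₀ hK0]
      rw [div_lt_iff₀ (sub_pos.2 hγ1)] at hK
      linarith
    linarith [hγ i j hi hj hne hle]
  subst hij
  exact ⟨rfl, mul_left_cancel₀ (hpos i hi).ne' h⟩

theorem scaled_mean_injective_on_bounded_multisets_general {χ : Type*}
    (N : ℕ) (Z : χ → ℕ) (hZinj : Function.Injective Z)
    (s : ℕ → ℝ) (hpos : ∀ i ≤ N, 0 < s i)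
    (γ : ℝ) (hγ1 : 1 < γ)
    (hγ : ∀ i j, i ≤ N → j ≤ N → i ≠ j → s j ≤ s i → γ ≤ s i / s j)
    (K : ℝ) (hK : 1 / (γ - 1) < K) :
    ∀ X Y : Multiset χ, X ≠ 0 → Y ≠ 0 →
      Multiset.card X < N → Multiset.card Y < N →
      s (Multiset.card X) *
          ((X.map (fun x => (N : ℝ) ^ (-(Z x : ℤ)) + K)).sum / Multiset.card X) =
        s (Multiset.card Y) *
          ((Y.map (fun x => (N : ℝ) ^ (-(Z x : ℤ)) + K)).sum / Multiset.card Y) →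
      X = Y := by
  intro X Y hX hY hcX hcY heq
  have hN : (1 : ℝ) ≤ N := by exact_mod_cast (Multiset.card_pos.2 hX).trans hcX
  have hf (x : χ) : (N : ℝ) ^ (-(Z x : ℤ)) + K ∈ Set.Ioc K (K + 1) := by
    have hpow_pos : 0 < (N : ℝ) ^ (-(Z x : ℤ)) := zpow_pos (zero_lt_one.trans_le hN) _
    have hpow_le : (N : ℝ) ^ (-(Z x : ℤ)) ≤ 1 := zpow_le_one_of_nonpos₀ hN (by simp)
    constructor <;> linarith
  obtain ⟨hcard, hmean⟩ := eq_and_eq_of_mul_eq_mul_of_mem_Ioc hpos hγ hγ1 hK hcX.le hcY.le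
    (Multiset.sum_map_div_card_mem_Ioc hX fun x _ => hf x)
    (Multiset.sum_map_div_card_mem_Ioc hY fun x _ => hf x) heq
  have hsum : ((X.map Z).map fun a : ℕ => (N : ℝ) ^ (-(a : ℤ))).sum =
      ((Y.map Z).map fun a : ℕ => (N : ℝ) ^ (-(a : ℤ))).sum := by
    rw [hcard, div_left_inj' (by exact_mod_cast (Multiset.card_pos.2 hY).ne')] at hmean
    simpa [Multiset.sum_map_add, hcard] using hmean
  exact Multiset.map_injective hZinj
    (Multiset.eq_of_sum_map_zpow_neg_eq (by rwa [Multiset.card_map])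
      (by rwa [Multiset.card_map]) hsum)

/-- Theorem 2 of the paper: the mean aggregator composed with an
injective degree scaler is injective on bounded multisets of countable elements.
With `Z : χ → ℕ⁺` injective, all multiset sizes `< N`, `s` injective and positive
on `{0,...,N}`, `γ` the minimal ratio `> 1` between distinct values of `s`,
`K > 1/(γ-1)`, `f x = N^{-Z x} + K` and
`h X = s(|X|) · (1/|X|) ∑_{x∈X} f x`, the map `h` is injective on nonempty
multisets over `χ` of size less than `N`. -/
theorem scaled_mean_injective_on_bounded_multisets {χ : Type*} [Countable χ]
    (N : ℕ) (Z : χ → ℕ) (hZinj : Function.Injective Z) (hZpos : ∀ x, 1 ≤ Z x)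
    (s : ℕ → ℝ) (hs : Function.Injective s) (hpos : ∀ i ≤ N, 0 < s i)
    (γ : ℝ) (hγ1 : 1 < γ)
    (hγ : ∀ i j, i ≤ N → j ≤ N → i ≠ j → s j ≤ s i → γ ≤ s i / s j)
    (K : ℝ) (hK : 1 / (γ - 1) < K) :
    ∀ X Y : Multiset χ, X ≠ 0 → Y ≠ 0 →
      Multiset.card X < N → Multiset.card Y < N →
      s (Multiset.card X) *
          ((X.map (fun x => (N : ℝ) ^ (-(Z x : ℤ)) + K)).sum / Multiset.card X) =
        s (Multiset.card Y) *
          ((Y.map (fun x => (N : ℝ) ^ (-(Z x : ℤ)) + K)).sum / Multiset.card Y) →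
      X = Y :=
  scaled_mean_injective_on_bounded_multisets_general N Z hZinj s hpos γ hγ1 hγ K hK
end
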